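/- arXiv:2411.19367 — 3 statements merged into one kernel-verified Lean document; each statement's English description precedes it below -/
import Mathlib

section
/- Explicit exterior solution for the optimality of the Landis conjecture (construction in the proof of Proposition 2.7). Let n >= 1. Define v : ℝⁿ → ℝ by v(x) = exp(-|x|)·cos(|x|) and b1 : ℝⁿ \ {0} → ℝⁿ by b1(x) = (2 - (n-1)/|x|)·x/|x|. Then v is smooth on the open set {x : |x| > 1} and for every x with |x| > 1: Δv(x) + b1(x)·∇v(x) + 2·v(x) = 0. -/
open Metric Real Set MeasureTheory
open scoped ENNReal RealInnerProductSpace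

noncomputable section

/-- Euclidean space `ℝⁿ`. -/
abbrev Euc (n : ℕ) : Type := EuclideanSpace ℝ (Fin n)

/-- The Euclidean Laplacian `Δu(x) = ∑ᵢ ∂²u/∂xᵢ²(x)`. -/
noncomputable def lapl {n : ℕ} (u : Euc n → ℝ) (x : Euc n) : ℝ :=
  ∑ i : Fin n, fderiv ℝ (fun y => fderiv ℝ u y (EuclideanSpace.single i (1 : ℝ))) x
    (EuclideanSpace.single i (1 : ℝ))

end

lemma hasFDerivAt_norm_ne {n : ℕ} (x : Euc n) (hx : x ≠ 0) :
    HasFDerivAt (fun y : Euc n => ‖y‖) (‖x‖⁻¹ • innerSL ℝ x) x := by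
  have hx0 : ‖x‖ ≠ 0 := norm_ne_zero_iff.mpr hx
  have h1 : HasFDerivAt (fun y : Euc n => ‖y‖ ^ 2) (2 • innerSL ℝ x) x := by
    simpa using (hasFDerivAt_id x).norm_sq
  have hsq : (‖x‖ : ℝ) ^ 2 ≠ 0 := pow_ne_zero _ hx0
  have h2 := (hasDerivAt_sqrt hsq).comp_hasFDerivAt x h1
  have heq : (fun y : Euc n => Real.sqrt (‖y‖ ^ 2)) = fun y : Euc n => ‖y‖ := by
    funext y; rw [Real.sqrt_sq (norm_nonneg y)]
  rw [Function.comp_def, heq] at h2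
  refine h2.congr_fderiv (Eq.symm ?_)
  ext z
  simp only [ContinuousLinearMap.smul_apply, ContinuousLinearMap.coe_smul', Pi.smul_apply]
  rw [Real.sqrt_sq (norm_nonneg x)]
  simp [two_smul]
  ring

lemma radial_hasFDerivAt {n : ℕ} {f : ℝ → ℝ} {f' : ℝ} (x : Euc n) (hx : x ≠ 0)
    (hf : HasDerivAt f f' ‖x‖) :
    HasFDerivAt (fun y : Euc n => f ‖y‖) (f' • (‖x‖⁻¹ • innerSL ℝ x)) x :=
  hf.comp_hasFDerivAt x (hasFDerivAt_norm_ne x hx)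

/-- derivative of `f r = exp(-r) cos r`. -/
lemma hasDerivAt_f0 (r : ℝ) :
    HasDerivAt (fun s => Real.exp (-s) * Real.cos s)
      (-(Real.exp (-r) * Real.cos r) - Real.exp (-r) * Real.sin r) r := by
  have h1 : HasDerivAt (fun s : ℝ => Real.exp (-s)) (-Real.exp (-r)) r := by
    have := (Real.hasDerivAt_exp (-r)).comp r (hasDerivAt_neg r)
    simpa [Function.comp_def] using this
  have h := h1.mul (Real.hasDerivAt_cos r)
  refine h.congr_deriv ?_
  ring

/-- derivative of `f' r = -(exp(-r) cos r) - exp(-r) sin r`. -/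
lemma hasDerivAt_f1 (r : ℝ) :
    HasDerivAt (fun s => -(Real.exp (-s) * Real.cos s) - Real.exp (-s) * Real.sin s)
      (2 * (Real.exp (-r) * Real.sin r)) r := by
  have h1 : HasDerivAt (fun s : ℝ => Real.exp (-s)) (-Real.exp (-r)) r := by
    have := (Real.hasDerivAt_exp (-r)).comp r (hasDerivAt_neg r)
    simpa [Function.comp_def] using this
  have h := ((h1.mul (Real.hasDerivAt_cos r)).neg).sub (h1.mul (Real.hasDerivAt_sin r))
  refine h.congr_deriv ?_
  ring

/-- construction in the proof of Proposition 2.7: the explicit exterior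
solution `v(x) = e^{-|x|} cos|x|` with drift `b₁(x) = (2 - (n-1)/|x|) x/|x|` satisfies
`Δv + b₁·∇v + 2v = 0` on `{|x| > 1}`, and `v` is smooth there. -/
theorem landis_exterior_solution
    (n : ℕ) (hn : 1 ≤ n)
    (v : Euc n → ℝ) (hv : ∀ x : Euc n, v x = Real.exp (-‖x‖) * Real.cos ‖x‖)
    (b1 : Euc n → Euc n)
    (hb1 : ∀ x : Euc n, x ≠ 0 → b1 x = (2 - ((n : ℝ) - 1) / ‖x‖) • (‖x‖⁻¹ • x)) :
    ContDiffOn ℝ (⊤ : ℕ∞) v {x : Euc n | 1 < ‖x‖} ∧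
    ∀ x : Euc n, 1 < ‖x‖ →
      lapl v x + ⟪b1 x, gradient v x⟫ + 2 * v x = 0 := by
  have hveq : v = fun x : Euc n => Real.exp (-‖x‖) * Real.cos ‖x‖ := funext hv
  subst hveq
  set f0 : ℝ → ℝ := fun s => Real.exp (-s) * Real.cos s with hf0
  set f1 : ℝ → ℝ := fun s => -(Real.exp (-s) * Real.cos s) - Real.exp (-s) * Real.sin s with hf1
  constructor
  · intro x hx
    have hx0 : x ≠ 0 := by
      intro h; rw [h] at hx; simp at hx; linarith
    have hfsm : ContDiff ℝ (⊤ : ℕ∞) f0 :=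
      (Real.contDiff_exp.comp contDiff_neg).mul Real.contDiff_cos
    exact (hfsm.contDiffAt.comp x (contDiffAt_norm ℝ hx0)).contDiffWithinAt
  · intro x hx
    have hx0 : x ≠ 0 := by
      intro h; rw [h] at hx; simp at hx; linarith
    have hr0 : ‖x‖ ≠ 0 := norm_ne_zero_iff.mpr hx0
    set r : ℝ := ‖x‖ with hr
    -- the gradient
    have hgradF : HasFDerivAt (fun y : Euc n => f0 ‖y‖) (f1 r • (r⁻¹ • innerSL ℝ x)) x :=
      radial_hasFDerivAt x hx0 (hasDerivAt_f0 r)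
    have hgrad : HasGradientAt (fun y : Euc n => f0 ‖y‖) ((f1 r * r⁻¹) • x) x := by
      rw [hasGradientAt_iff_hasFDerivAt]
      refine hgradF.congr_fderiv (Eq.symm ?_)
      ext z
      simp [InnerProductSpace.toDual_apply_apply, real_inner_smul_left, mul_assoc]
    have hgradeq : gradient (fun y : Euc n => f0 ‖y‖) x = (f1 r * r⁻¹) • x :=
      hgrad.gradient
    -- first derivative in coordinate directions, as a function of y
    have hd1 : ∀ (y : Euc n), y ≠ 0 → ∀ i : Fin n,
        fderiv ℝ (fun z : Euc n => f0 ‖z‖) y (EuclideanSpace.single i (1 : ℝ))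
          = (f1 ‖y‖ * ‖y‖⁻¹) * y i := by
      intro y hy i
      have h := (radial_hasFDerivAt y hy (hasDerivAt_f0 ‖y‖)).fderiv
      rw [h]
      simp [EuclideanSpace.inner_single_right, real_inner_smul_left]
      ring
    -- second derivatives
    set q : ℝ := f1 r * r⁻¹ with hq
    set q' : ℝ := 2 * (Real.exp (-r) * Real.sin r) * r⁻¹ + f1 r * (-(r ^ 2)⁻¹) with hq'
    have hd2 : ∀ i : Fin n,
        fderiv ℝ (fun y : Euc n =>
            fderiv ℝ (fun z : Euc n => f0 ‖z‖) y (EuclideanSpace.single i (1 : ℝ))) x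
          (EuclideanSpace.single i (1 : ℝ))
          = q' * (r⁻¹ * x i) * x i + q := by
      intro i
      have hop : IsOpen {y : Euc n | y ≠ 0} := isOpen_compl_singleton
      have hmem : x ∈ {y : Euc n | y ≠ 0} := hx0
      have hev : (fun y : Euc n =>
            fderiv ℝ (fun z : Euc n => f0 ‖z‖) y (EuclideanSpace.single i (1 : ℝ)))
          =ᶠ[nhds x] fun y : Euc n => (f1 ‖y‖ * ‖y‖⁻¹) * y i := by
        filter_upwards [hop.mem_nhds hmem] with y hy
        exact hd1 y hy i
      rw [hev.fderiv_eq]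
      -- derivative of y ↦ (f1 ‖y‖ * ‖y‖⁻¹) * y i
      have hqd : HasDerivAt (fun s : ℝ => f1 s * s⁻¹) q' r :=
        (hasDerivAt_f1 r).mul (hasDerivAt_inv hr0)
      have hφ : HasFDerivAt (fun y : Euc n => f1 ‖y‖ * ‖y‖⁻¹)
          (q' • (r⁻¹ • innerSL ℝ x)) x := radial_hasFDerivAt x hx0 hqd
      have hproj : HasFDerivAt (fun y : Euc n => y i)
          (EuclideanSpace.proj (𝕜 := ℝ) i) x :=
        (EuclideanSpace.proj (𝕜 := ℝ) i).hasFDerivAt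
      have h := hφ.mul hproj
      rw [show (fun y : Euc n => f1 ‖y‖ * ‖y‖⁻¹ * y i) = ((fun y : Euc n => f1 ‖y‖ * ‖y‖⁻¹) * fun y : Euc n => y i) from rfl, h.fderiv]
      simp [EuclideanSpace.inner_single_right, EuclideanSpace.single_apply,
        real_inner_smul_left]
      ring
    -- Laplacian
    have hlap : lapl (fun y : Euc n => f0 ‖y‖) x = q' * r⁻¹ * r ^ 2 + n * q := by
      unfold lapl
      rw [Finset.sum_congr rfl fun i _ => hd2 i]
      rw [Finset.sum_add_distrib, Finset.sum_const]
      have hsum : ∑ i : Fin n, q' * (r⁻¹ * x i) * x i = q' * r⁻¹ * ∑ i : Fin n, x i ^ 2 := by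
        rw [Finset.mul_sum]; congr 1; funext i; ring
      have hnorm2 : ∑ i : Fin n, x i ^ 2 = r ^ 2 := by
        have h := EuclideanSpace.norm_eq x
        rw [← hr] at h
        have hnn : 0 ≤ ∑ i : Fin n, ‖x i‖ ^ 2 :=
          Finset.sum_nonneg fun i _ => sq_nonneg _
        have : r ^ 2 = ∑ i : Fin n, ‖x i‖ ^ 2 := by
          rw [h, Real.sq_sqrt hnn]
        rw [this]
        congr 1; funext i; rw [Real.norm_eq_abs, sq_abs]
      rw [hsum, hnorm2]
      simp [nsmul_eq_mul]
    -- the drift term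
    rw [hlap, hgradeq, hb1 x hx0, ← hr]
    rw [real_inner_smul_left, real_inner_smul_left, real_inner_smul_right,
      real_inner_self_eq_norm_sq, ← hr]
    have hrne : r ≠ 0 := hr0
    simp only [hq', hq, hf1, hf0]
    field_simp
    ring
end

section
/- Optimality of the exponential constant in the maximum principle, Schrödinger case (Proposition 4.1(i), explicit construction). Let n >= 2 and q in (n, ∞]. There exists a constant C = C(n, q) > 0 such that for every real lambda >= 2n the following hold, where phi(x) := (1 - |x|²)/2, c(x) := lambda²·|x|² - lambda·n, and u(x) := exp(lambda·phi(x)) - 1: (a) Δu(x) = c(x)·(u(x) + 1) for every x in ℝⁿ, i.e. u is a classical solution of -Δu + c·u = -c on ℝⁿ; (b) u(x) = 0 whenever |x| = 1 and u > 0 on the open unit ball B_1; (c) u(0) >= C·lambda^{-2}·(exp(lambda/2) - 1)·||c||_{L^q(B_1)}. In particular the solution of the Dirichlet problem -Δu + c·u = f in B_1, u = 0 on ∂B_1, with f = -c, satisfies u(0) >= C·lambda^{-2}·exp(lambda/2)·||f||_{L^q(B_1)} up to the stated constant. -/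
open Metric Real Set MeasureTheory
open scoped ENNReal RealInnerProductSpace

lemma key1 (n : ℕ) (lam : ℝ) (x : Euc n) :
    HasFDerivAt (fun y : Euc n => Real.exp (lam * ((1 - ‖y‖ ^ 2) / 2)) - 1)
      ((Real.exp (lam * ((1 - ‖x‖ ^ 2) / 2)) * (-lam)) • innerSL ℝ x) x := by
  have h1 : HasFDerivAt (fun y : Euc n => ‖y‖ ^ 2) (2 • innerSL ℝ x) x :=
    (hasStrictFDerivAt_norm_sq x).hasFDerivAt
  have h2 : HasFDerivAt (fun y : Euc n => lam * ((1 - ‖y‖ ^ 2) / 2))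
      ((-lam) • innerSL ℝ x) x := by
    have heq : (fun y : Euc n => lam * ((1 - ‖y‖ ^ 2) / 2))
        = fun y => lam / 2 + (-(lam / 2)) * ‖y‖ ^ 2 := by funext y; ring
    have hD : ((-lam) • innerSL ℝ x : Euc n →L[ℝ] ℝ)
        = (-(lam / 2)) • (2 • innerSL ℝ x) := by
      ext v; simp [smul_smul]; ring
    rw [heq, hD]
    exact (h1.const_mul (-(lam / 2))).const_add (lam / 2)
  have h3 := (h2.exp).sub_const 1
  rw [smul_smul] at h3; exact h3

lemma key2 (n : ℕ) (lam : ℝ) (x : Euc n) :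
    HasFDerivAt (fun y : Euc n => lam * ((1 - ‖y‖ ^ 2) / 2))
      ((-lam) • innerSL ℝ x) x := by
  have h1 : HasFDerivAt (fun y : Euc n => ‖y‖ ^ 2) (2 • innerSL ℝ x) x :=
    (hasStrictFDerivAt_norm_sq x).hasFDerivAt
  have heq : (fun y : Euc n => lam * ((1 - ‖y‖ ^ 2) / 2))
      = fun y => lam / 2 + (-(lam / 2)) * ‖y‖ ^ 2 := by funext y; ring
  have hD : ((-lam) • innerSL ℝ x : Euc n →L[ℝ] ℝ)
      = (-(lam / 2)) • (2 • innerSL ℝ x) := by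
    ext v; simp [smul_smul]; ring
  rw [heq, hD]
  exact (h1.const_mul (-(lam / 2))).const_add (lam / 2)

lemma lapl_eq (n : ℕ) (lam : ℝ) (u : Euc n → ℝ)
    (hu : ∀ x : Euc n, u x = Real.exp (lam * ((1 - ‖x‖ ^ 2) / 2)) - 1) (x : Euc n) :
    lapl u x = (lam ^ 2 * ‖x‖ ^ 2 - lam * n) * Real.exp (lam * ((1 - ‖x‖ ^ 2) / 2)) := by
  have hu' : u = fun y => Real.exp (lam * ((1 - ‖y‖ ^ 2) / 2)) - 1 := funext hu
  have hfd : ∀ y : Euc n, fderiv ℝ u y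
      = (Real.exp (lam * ((1 - ‖y‖ ^ 2) / 2)) * (-lam)) • innerSL ℝ y := by
    intro y; rw [hu']; exact (key1 n lam y).fderiv
  have hinner : ∀ (y : Euc n) (i : Fin n), ⟪y, EuclideanSpace.single i (1:ℝ)⟫ = y i := by
    intro y i
    simp [EuclideanSpace.inner_single_right]
  have step1 : ∀ i : Fin n, (fun y : Euc n => fderiv ℝ u y (EuclideanSpace.single i (1:ℝ)))
      = fun y => Real.exp (lam * ((1 - ‖y‖ ^ 2) / 2)) * (-lam) * (y i) := by
    intro i; funext y
    rw [hfd y]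
    simp [hinner y i]
  have step2 : ∀ i : Fin n,
      HasFDerivAt (fun y : Euc n => Real.exp (lam * ((1 - ‖y‖ ^ 2) / 2)) * (-lam) * (y i))
        ((Real.exp (lam * ((1 - ‖x‖ ^ 2) / 2)) * (-lam)) • (EuclideanSpace.proj i)
          + (x i) • ((-lam) • (Real.exp (lam * ((1 - ‖x‖ ^ 2) / 2)) •
              ((-lam) • innerSL ℝ x)))) x := by
    intro i
    have hf1 : HasFDerivAt (fun y : Euc n => Real.exp (lam * ((1 - ‖y‖ ^ 2) / 2)) * (-lam))
        ((-lam) • (Real.exp (lam * ((1 - ‖x‖ ^ 2) / 2)) • ((-lam) • innerSL ℝ x))) x :=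
      ((key2 n lam x).exp).mul_const (-lam)
    exact hf1.mul ((EuclideanSpace.proj (𝕜 := ℝ) i).hasFDerivAt)
  have step3 : ∀ i : Fin n,
      fderiv ℝ (fun y => fderiv ℝ u y (EuclideanSpace.single i (1:ℝ))) x
        (EuclideanSpace.single i (1:ℝ))
      = Real.exp (lam * ((1 - ‖x‖ ^ 2) / 2)) * (lam ^ 2 * (x i) ^ 2 - lam) := by
    intro i
    rw [step1 i, (step2 i).fderiv]
    simp [hinner x i, EuclideanSpace.single_apply]
    ring
  have hsum : ∑ i : Fin n, (x i) ^ 2 = ‖x‖ ^ 2 := by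
    rw [EuclideanSpace.norm_eq, Real.sq_sqrt (by positivity)]
    simp [Real.norm_eq_abs, sq_abs]
  rw [lapl]
  simp only [step3]
  rw [← Finset.mul_sum, Finset.sum_sub_distrib, ← Finset.mul_sum, hsum,
    Finset.sum_const, Finset.card_univ, Fintype.card_fin, nsmul_eq_mul]
  ring

/-- Proposition 4.1(i), explicit construction: optimality of the
exponential constant in the maximum principle, Schrödinger case. With
`φ(x) = (1-|x|²)/2`, `c = λ²|x|² - λn`, `u = e^{λφ} - 1` (for `λ ≥ 2n`):
`Δu = c(u+1)` on `ℝⁿ`, `u = 0` on `{|x|=1}`, `u > 0` in `B₁`, and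
`u(0) ≥ C λ⁻² (e^{λ/2} - 1) ‖c‖_{L^q(B₁)}`. -/
theorem maximum_principle_optimality_schrodinger
    (n : ℕ) (hn : 2 ≤ n) (q : ℝ≥0∞) (hq : (n : ℝ≥0∞) < q) :
    ∃ C : ℝ, 0 < C ∧
      ∀ lam : ℝ, 2 * n ≤ lam →
      ∀ u c : Euc n → ℝ,
        (∀ x : Euc n, u x = Real.exp (lam * ((1 - ‖x‖ ^ 2) / 2)) - 1) →
        (∀ x : Euc n, c x = lam ^ 2 * ‖x‖ ^ 2 - lam * n) →
        (∀ x : Euc n, lapl u x = c x * (u x + 1)) ∧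
        (∀ x : Euc n, ‖x‖ = 1 → u x = 0) ∧
        (∀ x ∈ ball (0 : Euc n) 1, 0 < u x) ∧
        C / lam ^ 2 * (Real.exp (lam / 2) - 1)
            * (eLpNorm c q (volume.restrict (ball (0 : Euc n) 1))).toReal
          ≤ u 0 := by
  set v : ℝ≥0∞ := volume (ball (0 : Euc n) 1) with hv
  set M : ℝ≥0∞ := max v 1 with hM
  have hvlt : v < ⊤ := measure_ball_lt_top
  have hMlt : M < ⊤ := by
    rw [hM]; exact max_lt hvlt ENNReal.one_lt_top
  have hM1 : (1 : ℝ) ≤ M.toReal := by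
    rw [hM]
    have : (1 : ℝ≥0∞).toReal ≤ (max v 1).toReal :=
      ENNReal.toReal_mono (ne_of_lt hMlt) (le_max_right _ _)
    simpa using this
  have hMpos : (0 : ℝ) < M.toReal := by linarith
  refine ⟨1 / (2 * M.toReal), by positivity, ?_⟩
  intro lam hlam u c hu hc
  have hn2 : (2 : ℝ) ≤ (n : ℝ) := by exact_mod_cast hn
  have hlam4 : (4 : ℝ) ≤ lam := by nlinarith
  have hlampos : (0 : ℝ) < lam := by linarith
  refine ⟨?_, ?_, ?_, ?_⟩
  · intro x
    rw [lapl_eq n lam u hu x, hc x, hu x]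
    ring
  · intro x hx; rw [hu x, hx]; norm_num
  · intro x hx
    rw [mem_ball_zero_iff] at hx
    rw [hu x]
    have h1 : 0 < lam * ((1 - ‖x‖ ^ 2) / 2) := by
      have h2 : ‖x‖ ^ 2 < 1 := by nlinarith [norm_nonneg x]
      nlinarith
    have h3 : Real.exp 0 < Real.exp (lam * ((1 - ‖x‖ ^ 2) / 2)) :=
      Real.exp_lt_exp.mpr h1
    rw [Real.exp_zero] at h3
    linarith
  · -- main estimate
    have hu0 : u 0 = Real.exp (lam / 2) - 1 := by
      rw [hu 0]
      norm_num
      ring_nf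
    have hbound : ∀ᵐ x ∂(volume.restrict (ball (0 : Euc n) 1)), ‖c x‖ ≤ 2 * lam ^ 2 := by
      rw [ae_restrict_iff' measurableSet_ball]
      refine ae_of_all _ fun x hx => ?_
      rw [mem_ball_zero_iff] at hx
      rw [hc x, Real.norm_eq_abs, abs_le]
      have h0 : (0:ℝ) ≤ ‖x‖ := norm_nonneg x
      have hn' : (n : ℝ) ≤ lam / 2 := by linarith
      have hx2 : ‖x‖ ^ 2 ≤ 1 := by nlinarith
      have hn0 : (0:ℝ) ≤ (n : ℝ) := by linarith
      constructor
      · nlinarith [mul_nonneg (sq_nonneg lam) (sq_nonneg ‖x‖),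
          mul_le_mul_of_nonneg_left hn' hlampos.le]
      · nlinarith [mul_nonneg hlampos.le hn0,
          mul_le_mul_of_nonneg_left hx2 (sq_nonneg lam)]
    have hle := eLpNorm_le_of_ae_bound (p := q)
      (μ := volume.restrict (ball (0 : Euc n) 1)) hbound
    rw [Measure.restrict_apply_univ] at hle
    have hrow : v ^ q.toReal⁻¹ ≤ M := by
      rcases le_or_gt v 1 with h | h
      · calc v ^ q.toReal⁻¹ ≤ 1 ^ q.toReal⁻¹ :=
              ENNReal.rpow_le_rpow h (by positivity)
          _ = 1 := ENNReal.one_rpow _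
          _ ≤ M := le_max_right _ _
      · have hr1 : q.toReal⁻¹ ≤ 1 := by
          rcases eq_or_ne q ⊤ with rfl | hqt
          · simp
          · have h2q : (1 : ℝ≥0∞) ≤ q := le_of_lt (lt_of_le_of_lt (by
              exact_mod_cast Nat.one_le_of_lt (lt_of_lt_of_le one_lt_two hn)) hq)
            have : (1:ℝ) ≤ q.toReal := by
              have := ENNReal.toReal_mono hqt h2q
              simpa using this
            exact inv_le_one_of_one_le₀ this
        calc v ^ q.toReal⁻¹ ≤ v ^ (1:ℝ) :=
              ENNReal.rpow_le_rpow_of_exponent_le h.le hr1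
          _ = v := ENNReal.rpow_one v
          _ ≤ M := le_max_left _ _
    have hle2 : eLpNorm c q (volume.restrict (ball (0 : Euc n) 1))
        ≤ M * ENNReal.ofReal (2 * lam ^ 2) :=
      hle.trans (mul_le_mul_left hrow _)
    have hT : (eLpNorm c q (volume.restrict (ball (0 : Euc n) 1))).toReal
        ≤ M.toReal * (2 * lam ^ 2) := by
      have hfin : M * ENNReal.ofReal (2 * lam ^ 2) ≠ ⊤ :=
        ENNReal.mul_ne_top (ne_of_lt hMlt) ENNReal.ofReal_ne_top
      have := ENNReal.toReal_mono hfin hle2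
      rwa [ENNReal.toReal_mul, ENNReal.toReal_ofReal (by positivity)] at this
    set T := (eLpNorm c q (volume.restrict (ball (0 : Euc n) 1))).toReal with hT0
    have hTnn : 0 ≤ T := ENNReal.toReal_nonneg
    have hE : (0:ℝ) ≤ Real.exp (lam / 2) - 1 := by
      have : (1:ℝ) ≤ Real.exp (lam / 2) := Real.one_le_exp (by linarith)
      linarith
    rw [hu0]
    have key : 1 / (2 * M.toReal) / lam ^ 2 * (Real.exp (lam / 2) - 1) * T
        ≤ 1 / (2 * M.toReal) / lam ^ 2 * (Real.exp (lam / 2) - 1)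
            * (M.toReal * (2 * lam ^ 2)) := by
      apply mul_le_mul_of_nonneg_left hT
      positivity
    calc 1 / (2 * M.toReal) / lam ^ 2 * (Real.exp (lam / 2) - 1) * T
        ≤ 1 / (2 * M.toReal) / lam ^ 2 * (Real.exp (lam / 2) - 1)
            * (M.toReal * (2 * lam ^ 2)) := key
      _ = (Real.exp (lam / 2) - 1)
            * (1 / (2 * M.toReal) / lam ^ 2 * (M.toReal * (2 * lam ^ 2))) := by ring
      _ = Real.exp (lam / 2) - 1 := by
          have hM0 : M.toReal ≠ 0 := ne_of_gt hMpos
          have hl0 : lam ≠ 0 := ne_of_gt hlampos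
          have hone : 1 / (2 * M.toReal) / lam ^ 2 * (M.toReal * (2 * lam ^ 2)) = 1 := by
            field_simp
          rw [hone, mul_one]
end

section
/- Covering of a bounded domain by balls with Harnack chains of optimal length (Proposition 5.3(i)). Let n >= 1. There exist constants c0, c1 > 0 depending only on n with the following property. Let Ω ⊂ ℝⁿ be a nonempty bounded open connected set of diameter D0, let D > 0 be such that every pair of points x, y in Ω can be joined by a continuous path γ : [0,1] → Ω with γ(0) = x, γ(1) = y whose length (total variation of γ over [0,1]) is at most D, and let r be a real number with 0 < r < D. Then there exist natural numbers N and I with 2 <= N <= 2 + 6·D/r and 2 <= I <= c0·(1 + D0/r)ⁿ, and points x_1, ..., x_I in Ω, such that: (a) Ω is contained in the union of the open balls B_r(x_j), j = 1, ..., I; and (b) for every pair of indices k, l in {1, ..., I} there exist p in {2, ..., N} and indices j_1, ..., j_p in {1, ..., I} with j_1 = k, j_p = l, and vol( B_r(x_{j_{i-1}}) ∩ B_r(x_{j_i}) ) >= c1·rⁿ for every i in {2, ..., p}, where vol denotes Lebesgue measure on ℝⁿ. -/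
open Metric Real Set MeasureTheory
open scoped ENNReal

lemma euc_nontrivial {n : ℕ} (hn : 1 ≤ n) : Nontrivial (Euc n) := by
  have : Nonempty (Fin n) := ⟨⟨0, hn⟩⟩
  infer_instance

lemma euc_vol_ball {n : ℕ} (hn : 1 ≤ n) (x : Euc n) {s : ℝ} (hs : 0 ≤ s) :
    volume (ball x s) = ENNReal.ofReal (s ^ n) * volume (ball (0 : Euc n) 1) := by
  haveI := euc_nontrivial hn
  rw [Measure.addHaar_ball volume x hs, finrank_euclideanSpace_fin]

lemma ball_inter_volume {n : ℕ} (hn : 1 ≤ n) {a b : Euc n} {r : ℝ} (hr : 0 < r)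
    (hab : dist a b ≤ 3/2 * r) :
    ENNReal.ofReal ((r/4)^n) * volume (ball (0:Euc n) 1) ≤ volume (ball a r ∩ ball b r) := by
  set m := midpoint ℝ a b with hm
  have hsub : ball m (r/4) ⊆ ball a r ∩ ball b r := by
    intro z hz
    simp only [mem_ball] at hz ⊢
    have hma : dist m a = dist a b / 2 := by rw [hm, dist_midpoint_left]; norm_num; ring
    have hmb : dist m b = dist a b / 2 := by rw [hm, dist_midpoint_right]; norm_num; ring
    constructor
    · calc dist z a ≤ dist z m + dist m a := dist_triangle _ _ _
        _ < r := by rw [hma]; linarith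
    · calc dist z b ≤ dist z m + dist m b := dist_triangle _ _ _
        _ < r := by rw [hmb]; linarith
  calc ENNReal.ofReal ((r/4)^n) * volume (ball (0:Euc n) 1) = volume (ball m (r/4)) :=
        (euc_vol_ball hn m (by positivity)).symm
    _ ≤ _ := measure_mono hsub

lemma card_le_packing {n : ℕ} (hn : 1 ≤ n) (F : Finset (Euc n)) {ε R : ℝ} (hε : 0 < ε)
    (hR : 0 ≤ R)
    (hsep : (↑F : Set (Euc n)).Pairwise fun x y => 2*ε ≤ dist x y)
    (x0 : Euc n) (hsub : ∀ x ∈ F, ball x ε ⊆ ball x0 R) :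
    (F.card : ℝ) * ε ^ n ≤ R ^ n := by
  set v := volume (ball (0:Euc n) 1) with hv
  have hv0 : v ≠ 0 := (measure_ball_pos volume _ one_pos).ne'
  have hvt : v ≠ ⊤ := measure_ball_lt_top.ne
  have hdisj : (↑F : Set (Euc n)).PairwiseDisjoint (fun x => ball x ε) := by
    intro x hx y hy hxy
    have h2 : 2*ε ≤ dist x y := hsep hx hy hxy
    rw [Function.onFun, Set.disjoint_left]
    intro z hzx hzy
    have : dist x y ≤ dist x z + dist z y := dist_triangle _ _ _
    rw [mem_ball, dist_comm] at hzx
    rw [mem_ball] at hzy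
    linarith [dist_comm z y]
  have key : (F.card : ℝ≥0∞) * (ENNReal.ofReal (ε^n) * v) ≤ ENNReal.ofReal (R^n) * v := by
    calc (F.card : ℝ≥0∞) * (ENNReal.ofReal (ε^n) * v)
        = ∑ x ∈ F, volume (ball x ε) := by
          rw [Finset.sum_congr rfl (fun x _ => euc_vol_ball hn x hε.le), Finset.sum_const,
            nsmul_eq_mul]
      _ = volume (⋃ x ∈ F, ball x ε) :=
          (measure_biUnion_finset hdisj (fun b _ => measurableSet_ball)).symm
      _ ≤ volume (ball x0 R) := measure_mono (Set.iUnion₂_subset hsub)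
      _ = ENNReal.ofReal (R^n) * v := euc_vol_ball hn x0 hR
  rw [← mul_assoc] at key
  rw [ENNReal.mul_le_mul_iff_left hv0 hvt] at key
  have : ENNReal.ofReal ((F.card : ℝ) * ε^n) ≤ ENNReal.ofReal (R^n) := by
    rw [ENNReal.ofReal_mul (by positivity), ENNReal.ofReal_natCast]
    exact key
  exact (ENNReal.ofReal_le_ofReal_iff (by positivity)).mp this

lemma exists_net {n : ℕ} (Ω : Set (Euc n)) (hne : Ω.Nonempty) (hb : Bornology.IsBounded Ω)
    {ε : ℝ} (hε : 0 < ε) :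
    ∃ F : Finset (Euc n), ↑F ⊆ Ω ∧ F.Nonempty ∧
      ((↑F : Set (Euc n)).Pairwise fun x y => ε ≤ dist x y) ∧
      ∀ z ∈ Ω, ∃ x ∈ F, dist z x < ε := by
  classical
  set 𝒮 : Set (Set (Euc n)) := {S | S ⊆ Ω ∧ S.Pairwise fun x y => ε ≤ dist x y} with h𝒮
  obtain ⟨x0, hx0⟩ := hne
  have hx0S : ({x0} : Set (Euc n)) ∈ 𝒮 := ⟨by simpa using hx0, Set.pairwise_singleton _ _⟩
  obtain ⟨M, hM0, hMmax⟩ := zorn_subset_nonempty 𝒮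
    (fun c hc hchain hcne => by
      refine ⟨⋃₀ c, ⟨?_, ?_⟩, fun s hs => Set.subset_sUnion_of_mem hs⟩
      · exact Set.sUnion_subset fun s hs => (hc hs).1
      · intro x hx y hy hxy
        obtain ⟨s, hs, hxs⟩ := hx
        obtain ⟨t, ht, hyt⟩ := hy
        rcases hchain.total hs ht with h | h
        · exact (hc ht).2 (h hxs) hyt hxy
        · exact (hc hs).2 hxs (h hyt) hxy) _ hx0S
  have hMΩ : M ⊆ Ω := hMmax.prop.1
  have hMsep : M.Pairwise fun x y => ε ≤ dist x y := hMmax.prop.2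
  have hMne : M.Nonempty := ⟨x0, hM0 rfl⟩
  -- net property
  have hnet : ∀ z ∈ Ω, ∃ x ∈ M, dist z x < ε := by
    intro z hz
    by_contra h
    push_neg at h
    have hzM : z ∉ M := fun hzM => absurd (h z hzM) (by simp [hε])
    have : insert z M ∈ 𝒮 := by
      refine ⟨Set.insert_subset hz hMΩ, ?_⟩
      intro x hx y hy hxy
      rcases hx with rfl | hx
      · rcases hy with rfl | hy
        · exact absurd rfl hxy
        · exact h y hy
      · rcases hy with rfl | hy
        · rw [dist_comm]; exact h x hx
        · exact hMsep hx hy hxy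
    have := hMmax.2 this (Set.subset_insert z M)
    exact hzM (this (Set.mem_insert z M))
  -- finiteness
  have htb : TotallyBounded M :=
    (hb.isCompact_closure.totallyBounded).subset (hMΩ.trans subset_closure)
  obtain ⟨t, htfin, htcov⟩ := totallyBounded_iff.mp htb (ε/2) (by positivity)
  classical
  set f : Euc n → Euc n := fun x => if h : ∃ y ∈ t, x ∈ ball y (ε/2) then h.choose else x with hf
  have hfspec : ∀ x ∈ M, f x ∈ t ∧ dist x (f x) < ε/2 := by
    intro x hx
    have hex : ∃ y ∈ t, x ∈ ball y (ε/2) := by simpa using htcov hx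
    simp only [hf, dif_pos hex]
    exact ⟨hex.choose_spec.1, by have := hex.choose_spec.2; rwa [mem_ball] at this⟩
  have hinj : Set.InjOn f M := by
    intro x hx y hy hfxy
    by_contra hne'
    have h1 := (hfspec x hx).2
    have h2 := (hfspec y hy).2
    have hsep2 : ε ≤ dist x y := hMsep hx hy hne'
    have : dist x y ≤ dist x (f x) + dist (f y) y := by
      rw [hfxy]; exact dist_triangle _ _ _
    rw [dist_comm (f y) y] at this
    linarith
  have hMfin : M.Finite :=
    Set.Finite.of_finite_image (htfin.subset (by
      rintro _ ⟨x, hx, rfl⟩; exact (hfspec x hx).1)) hinj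
  refine ⟨hMfin.toFinset, ?_, ?_, ?_, ?_⟩
  · rw [Set.Finite.coe_toFinset]; exact hMΩ
  · simpa [Set.Finite.toFinset_nonempty] using hMne
  · rw [Set.Finite.coe_toFinset]; exact hMsep
  · intro z hz
    obtain ⟨x, hxM, hd⟩ := hnet z hz
    exact ⟨x, hMfin.mem_toFinset.mpr hxM, hd⟩

lemma exists_chain_times {n : ℕ} (γ : ℝ → Euc n) (hγ : ContinuousOn γ (Set.Icc 0 1))
    {D r : ℝ} (hr : 0 < r) (hD : 0 < D)
    (hvar : eVariationOn γ (Set.Icc 0 1) ≤ ENNReal.ofReal D) :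
    ∃ t : ℕ → ℝ, t 0 = 0 ∧ t (⌊D/r⌋₊ + 1) = 1 ∧ (∀ j, t j ∈ Set.Icc (0:ℝ) 1) ∧
      ∀ j, dist (γ (t (j+1))) (γ (t j)) ≤ r := by
  classical
  set T : ℝ → ℝ := fun s =>
    sInf (insert 1 (Set.Icc s 1 ∩ {u | r ≤ dist (γ u) (γ s)})) with hT
  -- key step properties
  have step : ∀ s ∈ Set.Icc (0:ℝ) 1, s ≤ T s ∧ T s ∈ Set.Icc (0:ℝ) 1 ∧
      dist (γ (T s)) (γ s) ≤ r ∧ (T s < 1 → r ≤ dist (γ (T s)) (γ s)) := by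
    intro s hs
    set A : Set ℝ := Set.Icc s 1 ∩ {u | r ≤ dist (γ u) (γ s)} with hA
    have hAsub : A ⊆ Set.Icc s 1 := Set.inter_subset_left
    have hbdd : BddBelow (insert 1 A) := by
      refine ⟨s, ?_⟩
      rintro u (rfl | hu)
      · exact hs.2
      · exact (hAsub hu).1
    have h1mem : (1:ℝ) ∈ insert 1 A := Set.mem_insert _ _
    have hTle1 : T s ≤ 1 := csInf_le hbdd h1mem
    have hsleT : s ≤ T s := le_csInf ⟨1, h1mem⟩ (by
      rintro u (rfl | hu)
      · exact hs.2
      · exact (hAsub hu).1)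
    have hTmem : T s ∈ Set.Icc (0:ℝ) 1 := ⟨hs.1.trans hsleT, hTle1⟩
    by_cases hAne : A.Nonempty
    · -- closedness of A
      have hgcont : ContinuousOn (fun u => dist (γ u) (γ s)) (Set.Icc s 1) :=
        (continuous_id.dist continuous_const).comp_continuousOn
          (hγ.mono (Set.Icc_subset_Icc hs.1 le_rfl))
      have hAclosed : IsClosed A := by
        have := hgcont.preimage_isClosed_of_isClosed isClosed_Icc (isClosed_Ici (a := r))
        convert this using 1
        exact hA
      have hAbdd : BddBelow A := ⟨s, fun u hu => (hAsub hu).1⟩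
      have hτmem : sInf A ∈ A := hAclosed.csInf_mem hAne hAbdd
      have hTeq : T s = sInf A := by
        rw [hT]
        simp only
        rw [csInf_insert hAbdd hAne]
        exact inf_eq_right.mpr ((hAsub hτmem).2)
      set τ := sInf A with hτ
      have hdistge : r ≤ dist (γ τ) (γ s) := hτmem.2
      have hsltτ : s < τ := by
        rcases lt_or_eq_of_le (hAsub hτmem).1 with h | h
        · exact h
        · exfalso; rw [← h, dist_self] at hdistge; linarith
      have hτIcc : τ ∈ Set.Icc (0:ℝ) 1 := ⟨hs.1.trans hsltτ.le, (hAsub hτmem).2⟩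
      -- dist ≤ r by continuity from the left
      have hdistle : dist (γ τ) (γ s) ≤ r := by
        have hneBot : (nhdsWithin τ (Set.Ico s τ)).NeBot := by
          rw [← mem_closure_iff_nhdsWithin_neBot, closure_Ico hsltτ.ne]
          exact ⟨hsltτ.le, le_rfl⟩
        have hcont : ContinuousWithinAt (fun u => dist (γ u) (γ s)) (Set.Icc 0 1) τ :=
          ((continuous_id.dist continuous_const).comp_continuousOn hγ) τ hτIcc
        have htend : Filter.Tendsto (fun u => dist (γ u) (γ s))
            (nhdsWithin τ (Set.Ico s τ)) (nhds (dist (γ τ) (γ s))) :=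
          hcont.mono_left (nhdsWithin_mono τ (fun u hu =>
            ⟨hs.1.trans hu.1, hu.2.le.trans (hAsub hτmem).2⟩))
        refine le_of_tendsto htend (eventually_nhdsWithin_of_forall ?_)
        intro u hu
        by_contra hc
        push_neg at hc
        have huA : u ∈ A := ⟨⟨hu.1, hu.2.le.trans (hAsub hτmem).2⟩, hc.le⟩
        exact absurd (csInf_le hAbdd huA) (not_le.mpr hu.2)
      rw [hTeq]
      exact ⟨hTeq ▸ hsleT, hTeq ▸ hTmem, hdistle, fun _ => hdistge⟩
    · -- A empty : T s = 1 and dist < r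
      have hAempty : A = ∅ := Set.not_nonempty_iff_eq_empty.mp hAne
      have hTeq : T s = 1 := by
        show sInf (insert 1 A) = 1
        rw [hAempty]
        simp
      have h1A : (1:ℝ) ∉ A := by rw [hAempty]; exact Set.notMem_empty _
      have : ¬ r ≤ dist (γ 1) (γ s) := by
        intro hc
        exact h1A ⟨⟨hs.2, le_rfl⟩, hc⟩
      rw [hTeq]
      exact ⟨hs.2, ⟨zero_le_one, le_rfl⟩, (not_le.mp this).le, fun h => absurd rfl h.ne⟩
  -- iterate
  set t : ℕ → ℝ := fun j => T^[j] 0 with ht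
  have ht0 : t 0 = 0 := rfl
  have htsucc : ∀ j, t (j+1) = T (t j) := fun j => Function.iterate_succ_apply' T j 0
  have hmem : ∀ j, t j ∈ Set.Icc (0:ℝ) 1 := by
    intro j
    induction j with
    | zero => exact ⟨le_rfl, zero_le_one⟩
    | succ j ih => rw [htsucc]; exact (step _ ih).2.1
  have hmono : Monotone t :=
    monotone_nat_of_le_succ (fun j => by rw [htsucc]; exact (step _ (hmem j)).1)
  have hstep : ∀ j, dist (γ (t (j+1))) (γ (t j)) ≤ r := by
    intro j; rw [htsucc]; exact (step _ (hmem j)).2.2.1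
  have hbig : ∀ j, t (j+1) < 1 → r ≤ dist (γ (t (j+1))) (γ (t j)) := by
    intro j h; rw [htsucc] at h ⊢; exact (step _ (hmem j)).2.2.2 h
  set m := ⌊D/r⌋₊ + 1 with hm
  have htm : t m = 1 := by
    by_contra hne
    have htm1 : t m < 1 := lt_of_le_of_ne (hmem m).2 hne
    have hlow : ∀ i ∈ Finset.range m, ENNReal.ofReal r ≤ edist (γ (t (i+1))) (γ (t i)) := by
      intro i hi
      rw [Finset.mem_range] at hi
      have : t (i+1) < 1 := lt_of_le_of_lt (hmono (Nat.succ_le_of_lt hi)) htm1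
      rw [edist_dist]
      exact ENNReal.ofReal_le_ofReal (hbig i this)
    have hsum : (m : ℝ≥0∞) * ENNReal.ofReal r ≤ eVariationOn γ (Set.Icc 0 1) := by
      calc (m : ℝ≥0∞) * ENNReal.ofReal r
          = (Finset.range m).card • ENNReal.ofReal r := by
            rw [Finset.card_range, nsmul_eq_mul]
        _ ≤ ∑ i ∈ Finset.range m, edist (γ (t (i+1))) (γ (t i)) :=
            Finset.card_nsmul_le_sum _ _ _ hlow
        _ ≤ _ := eVariationOn.sum_le (n := m) hmono (fun i => hmem i)
    have : ENNReal.ofReal ((m:ℝ) * r) ≤ ENNReal.ofReal D := by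
      rw [ENNReal.ofReal_mul (by positivity), ENNReal.ofReal_natCast]
      exact hsum.trans hvar
    have hmr : (m:ℝ) * r ≤ D := (ENNReal.ofReal_le_ofReal_iff hD.le).mp this
    have hflt : D/r < (m:ℝ) := by
      rw [hm]; push_cast; exact Nat.lt_floor_add_one (D/r)
    rw [div_lt_iff₀ hr] at hflt
    linarith
  exact ⟨t, ht0, htm, hmem, hstep⟩


/-- Proposition 5.3(i): covering of a bounded domain by balls with
Harnack chains of optimal length. There are `c₀, c₁ > 0` depending only on `n` such that,
for every nonempty bounded open connected `Ω ⊆ ℝⁿ` whose geodesic diameter is at most `D`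
(every two points of `Ω` are joined by a continuous path in `Ω` of length `≤ D`), and every
`0 < r < D`, there are `N ≤ 2 + 6D/r`, `I ≤ c₀(1 + diam Ω / r)ⁿ` and points
`x₁, …, x_I ∈ Ω` covering `Ω` by balls `B_r(x_j)`, any two of which are joined by a chain of
at most `N` balls with consecutive overlaps of measure `≥ c₁ rⁿ`. -/
theorem harnack_chain_covering
    (n : ℕ) (hn : 1 ≤ n) :
    ∃ c0 c1 : ℝ, 0 < c0 ∧ 0 < c1 ∧
      ∀ (Ω : Set (Euc n)), Ω.Nonempty → IsOpen Ω → IsConnected Ω →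
        Bornology.IsBounded Ω →
      ∀ D r : ℝ,
        (∀ x ∈ Ω, ∀ y ∈ Ω, ∃ γ : ℝ → Euc n,
          ContinuousOn γ (Set.Icc 0 1) ∧ γ 0 = x ∧ γ 1 = y ∧
          (∀ t ∈ Set.Icc (0 : ℝ) 1, γ t ∈ Ω) ∧
          eVariationOn γ (Set.Icc 0 1) ≤ ENNReal.ofReal D) →
        0 < r → r < D →
        ∃ N I : ℕ, 2 ≤ N ∧ (N : ℝ) ≤ 2 + 6 * D / r ∧ 2 ≤ I ∧
          (I : ℝ) ≤ c0 * (1 + Metric.diam Ω / r) ^ n ∧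
          ∃ xp : Fin I → Euc n,
            (∀ j, xp j ∈ Ω) ∧
            Ω ⊆ ⋃ j, ball (xp j) r ∧
            ∀ k l : Fin I, ∃ p : ℕ, 2 ≤ p ∧ p ≤ N ∧
              ∃ σ : ℕ → Fin I, σ 1 = k ∧ σ p = l ∧
                ∀ i : ℕ, 2 ≤ i → i ≤ p →
                  ENNReal.ofReal (c1 * r ^ n)
                    ≤ volume (ball (xp (σ (i - 1))) r ∩ ball (xp (σ i)) r) := by
  classical
  set v := volume (ball (0:Euc n) 1) with hv
  have hv0 : v ≠ 0 := (measure_ball_pos volume _ one_pos).ne'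
  have hvt : v ≠ ⊤ := measure_ball_lt_top.ne
  have hvr : 0 < v.toReal := ENNReal.toReal_pos hv0 hvt
  refine ⟨2 * 8^n, v.toReal / 4^n, by positivity, by positivity, ?_⟩
  intro Ω hne hopen hconn hbdd D r hpath hr hrD
  have hD : 0 < D := hr.trans hrD
  set D0 := Metric.diam Ω with hD0
  have hD0nn : 0 ≤ D0 := Metric.diam_nonneg
  obtain ⟨F, hFΩ, hFne, hFsep, hFnet⟩ := exists_net Ω hne hbdd
    (show (0:ℝ) < r/4 by positivity)
  obtain ⟨x0, hx0⟩ := hne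
  have hFsep' : (↑F : Set (Euc n)).Pairwise fun x y => 2*(r/8) ≤ dist x y := by
    intro x hx y hy hxy
    have h4 : r/4 ≤ dist x y := hFsep hx hy hxy
    show 2*(r/8) ≤ dist x y
    linarith
  have hsub : ∀ x ∈ F, ball x (r/8) ⊆ ball x0 (D0 + r) := by
    intro x hx z hz
    rw [mem_ball] at hz ⊢
    have hxx0 : dist x x0 ≤ D0 := Metric.dist_le_diam_of_mem hbdd (hFΩ hx) hx0
    calc dist z x0 ≤ dist z x + dist x x0 := dist_triangle _ _ _
      _ < D0 + r := by linarith
  have hcard : (F.card : ℝ) * (r/8)^n ≤ (D0 + r)^n :=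
    card_le_packing hn F (by positivity) (by positivity) hFsep' x0 hsub
  have hcard2 : (F.card : ℝ) ≤ 8^n * (1 + D0/r)^n := by
    have h8 : (8:ℝ)^n * (1 + D0/r)^n * (r/8)^n = (D0 + r)^n := by
      rw [← mul_pow, ← mul_pow]
      congr 1
      field_simp
      ring
    have hpow : (0:ℝ) < (r/8)^n := by positivity
    rw [← h8] at hcard
    exact le_of_mul_le_mul_right hcard hpow
  set c := F.card with hc
  have hc1 : 1 ≤ c := Finset.card_pos.mpr hFne
  set I := max c 2 with hI
  have hcI : c ≤ I := le_max_left _ _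
  set e := F.equivFin with he
  set xp : Fin I → Euc n := fun j =>
    if hj : (j:ℕ) < c then ((e.symm ⟨(j:ℕ), hj⟩ : {x // x ∈ F}) : Euc n)
    else ((e.symm ⟨0, by omega⟩ : {x // x ∈ F}) : Euc n)
    with hxp
  have hxpF : ∀ j, xp j ∈ F := by
    intro j
    rw [hxp]
    dsimp only
    split <;> exact Subtype.mem _
  have hxpΩ : ∀ j, xp j ∈ Ω := fun j => hFΩ (hxpF j)
  have hsurj : ∀ z ∈ F, ∃ j : Fin I, xp j = z := by
    intro z hz
    set i := e ⟨z, hz⟩ with hi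
    refine ⟨⟨(i:ℕ), lt_of_lt_of_le i.2 hcI⟩, ?_⟩
    rw [hxp]
    dsimp only
    rw [dif_pos (show ((⟨(i:ℕ), lt_of_lt_of_le i.2 hcI⟩ : Fin I) : ℕ) < c from i.2)]
    show ((e.symm i : {x // x ∈ F}) : Euc n) = z
    rw [hi, Equiv.symm_apply_apply]
  have hnet' : ∀ z ∈ Ω, ∃ j : Fin I, dist z (xp j) < r/4 := by
    intro z hz
    obtain ⟨x, hxF, hd⟩ := hFnet z hz
    obtain ⟨j, hj⟩ := hsurj x hxF
    exact ⟨j, by rw [hj]; exact hd⟩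
  set m := ⌊D/r⌋₊ + 1 with hm
  set N := ⌊6*D/r⌋₊ + 2 with hN
  have hDr : (0:ℝ) ≤ D/r := div_nonneg hD.le hr.le
  refine ⟨N, I, by omega, ?_, le_max_right _ _, ?_, xp, hxpΩ, ?_, ?_⟩
  · -- N ≤ 2 + 6D/r
    have := Nat.floor_le (show (0:ℝ) ≤ 6*D/r by positivity)
    rw [hN]
    push_cast
    linarith
  · -- cardinality bound
    have h1le : (1:ℝ) ≤ 1 + D0/r := by
      have : (0:ℝ) ≤ D0/r := div_nonneg hD0nn hr.le
      linarith
    have hpow1 : (1:ℝ) ≤ (1 + D0/r)^n := one_le_pow₀ h1le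
    have h8n : (1:ℝ) ≤ 8^n := one_le_pow₀ (by norm_num)
    rcases max_cases c 2 with ⟨hmax, hge⟩ | ⟨hmax, hlt2⟩
    · rw [hI, hmax]
      calc (c:ℝ) ≤ 8^n * (1 + D0/r)^n := hcard2
        _ ≤ 2 * 8^n * (1 + D0/r)^n := by nlinarith
    · rw [hI, hmax]
      push_cast
      nlinarith
  · -- covering
    intro z hz
    obtain ⟨j, hj⟩ := hnet' z hz
    exact Set.mem_iUnion.mpr ⟨j, mem_ball.mpr (by linarith)⟩
  · -- chains
    intro k l
    obtain ⟨γ, hγc, hγ0, hγ1, hγΩ, hγvar⟩ := hpath (xp k) (hxpΩ k) (xp l) (hxpΩ l)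
    obtain ⟨t, ht0, htm, htmem, htstep⟩ := exists_chain_times γ hγc hr hD hγvar
    have hchoice : ∀ j : ℕ, ∃ jx : Fin I, dist (γ (t j)) (xp jx) < r/4 :=
      fun j => hnet' _ (hγΩ _ (htmem j))
    set h : ℕ → Fin I := fun j =>
      if j = 0 then k else if m ≤ j then l else (hchoice j).choose with hh
    have hm1 : 1 ≤ m := by omega
    have hH : ∀ j ≤ m, dist (γ (t j)) (xp (h j)) ≤ r/4 := by
      intro j hj
      by_cases h0 : j = 0
      · subst h0
        have : h 0 = k := by simp [hh]
        rw [this, ht0, hγ0, dist_self]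
        positivity
      · by_cases hm' : m ≤ j
        · have hjm : j = m := le_antisymm hj hm'
          have : h j = l := by simp [hh, h0, hm']
          rw [this, hjm, htm, hγ1, dist_self]
          positivity
        · have : h j = (hchoice j).choose := by simp [hh, h0, hm']
          rw [this]
          exact ((hchoice j).choose_spec).le
    refine ⟨m + 1, by omega, ?_, fun i => h (i-1), ?_, ?_, ?_⟩
    · -- p ≤ N
      have hfl : ⌊D/r⌋₊ ≤ ⌊6*D/r⌋₊ := Nat.floor_mono (by rw [mul_div_assoc]; linarith)
      omega
    · show h 0 = k
      simp [hh]
    · show h m = l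
      simp [hh]
    · intro i h2i hip
      obtain ⟨a, rfl⟩ : ∃ a, i = a + 2 := ⟨i - 2, by omega⟩
      have ha1 : a + 1 ≤ m := by omega
      have hd1 := hH a (by omega)
      have hd2 := hH (a+1) ha1
      have hstep := htstep a
      have hdd : dist (xp (h a)) (xp (h (a+1))) ≤ 3/2 * r := by
        calc dist (xp (h a)) (xp (h (a+1)))
            ≤ dist (xp (h a)) (γ (t a)) + dist (γ (t a)) (xp (h (a+1))) := dist_triangle _ _ _
          _ ≤ dist (xp (h a)) (γ (t a)) + (dist (γ (t a)) (γ (t (a+1)))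
              + dist (γ (t (a+1))) (xp (h (a+1)))) := by
              linarith [dist_triangle (γ (t a)) (γ (t (a+1))) (xp (h (a+1)))]
          _ ≤ 3/2 * r := by
              rw [dist_comm (xp (h a)) (γ (t a)), dist_comm (γ (t a)) (γ (t (a+1)))]
              linarith
      have hkey := ball_inter_volume hn hr hdd
      have hidx1 : a + 2 - 1 - 1 = a := by omega
      have hidx2 : a + 2 - 1 = a + 1 := by omega
      show ENNReal.ofReal (v.toReal / 4^n * r^n)
          ≤ volume (ball (xp (h (a + 2 - 1 - 1))) r ∩ ball (xp (h (a + 2 - 1))) r)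
      rw [hidx1, hidx2]
      have heq : v.toReal / 4^n * r^n = v.toReal * (r/4)^n := by
        rw [div_pow]
        ring
      rw [heq, ENNReal.ofReal_mul hvr.le, ENNReal.ofReal_toReal hvt, mul_comm]
      exact hkey
end
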